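/- Let $T$ be a finite nonempty index set with distinguished element $t^*$, let $\Sigma_t > 0$ for each $t \in T$, and let $\tilde y_t : \mathbb{N} \to \mathbb{R}$ be prediction-error sequences. Define likelihoods $p_t(\tau) = (2\pi\Sigma_t)^{-1/2}\exp(-\tilde y_t(\tau)^2/(2\Sigma_t))$ and posteriors recursively from strictly positive priors $\pi_t(0)$ with $\sum_t \pi_t(0) = 1$ by $\pi_t(k) = p_t(k)\pi_t(k-1)/\sum_{s}p_s(k)\pi_s(k-1)$. Assume the Cesàro limits $V_t = \lim_{n\to\infty}\frac{1}{n}\sum_{\tau=1}^{n}\tilde y_t(\tau)^2$ exist for every $t \in T$, with $V_{t^*} = \Sigma_{t^*}$ and $V_t > \Sigma_{t^*}$ for every $t \neq t^*$. Then $\pi_{t^*}(k) \to 1$ and $\pi_t(k) \to 0$ for every $t \neq t^*$ as $k \to \infty$. -/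

import Mathlib

/-!
The log posterior odds of a candidate `t` against `t*` are the log prior odds plus the partial
sums of the log-likelihood ratios. By the Cesàro hypothesis these sums grow like `n (ℓ t - ℓ t*)`,
where `ℓ s = -log (2π S s) / 2 - V s / (2 S s)` is the time-averaged Gaussian log-likelihood, and
`log x ≤ x - 1` gives `ℓ t < ℓ t*`. So the odds tend to `0`, and since the posteriors sum to one,
all mass concentrates on `t*`.
-/

open Filter Topology Finset

noncomputable def cesaroMean (a : ℕ → ℝ) (n : ℕ) : ℝ := 1 / (n : ℝ) * ∑ k ∈ Icc 1 n, a k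

theorem cesaroMean_sub (a b : ℕ → ℝ) (n : ℕ) :
    cesaroMean (fun k => a k - b k) n = cesaroMean a n - cesaroMean b n := by
  simp only [cesaroMean, sum_sub_distrib, mul_sub]

theorem cesaroMean_const_add_mul_of_ne_zero (c α : ℝ) (a : ℕ → ℝ) {n : ℕ} (hn : n ≠ 0) :
    cesaroMean (fun k => c + α * a k) n = c + α * cesaroMean a n := by
  have hn' : (n : ℝ) ≠ 0 := Nat.cast_ne_zero.mpr hn
  simp only [cesaroMean, sum_add_distrib, ← mul_sum, sum_const, Nat.card_Icc,
    Nat.add_sub_cancel, nsmul_eq_mul]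
  field_simp

theorem Filter.Tendsto.cesaroMean_const_add_mul {a : ℕ → ℝ} {A : ℝ}
    (h : Tendsto (cesaroMean a) atTop (𝓝 A)) (c α : ℝ) :
    Tendsto (cesaroMean fun k => c + α * a k) atTop (𝓝 (c + α * A)) := by
  refine ((h.const_mul α).const_add c).congr' ?_
  filter_upwards [eventually_ne_atTop 0] with n hn
  exact (cesaroMean_const_add_mul_of_ne_zero c α a hn).symm

theorem tendsto_sum_Icc_atBot_of_cesaroMean {a : ℕ → ℝ} {c : ℝ}
    (h : Tendsto (cesaroMean a) atTop (𝓝 c)) (hc : c < 0) :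
    Tendsto (fun n => ∑ k ∈ Icc 1 n, a k) atTop atBot := by
  refine (tendsto_natCast_atTop_atTop.atTop_mul_neg hc h).congr' ?_
  filter_upwards [eventually_ne_atTop 0] with n hn
  have hn' : (n : ℝ) ≠ 0 := Nat.cast_ne_zero.mpr hn
  simp only [cesaroMean]
  field_simp

noncomputable def gaussianAvgLogLik (S v : ℝ) : ℝ := -Real.log (2 * Real.pi * S) / 2 - v / (2 * S)

theorem log_gaussian_density {S : ℝ} (hS : 0 < S) (y : ℝ) :
    Real.log ((Real.sqrt (2 * Real.pi * S))⁻¹ * Real.exp (-y ^ 2 / (2 * S)))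
      = -Real.log (2 * Real.pi * S) / 2 + (-(1 / (2 * S))) * y ^ 2 := by
  have h2piS : 0 < 2 * Real.pi * S := by positivity
  rw [Real.log_mul (by positivity) (Real.exp_ne_zero _), Real.log_inv, Real.log_exp,
    Real.log_sqrt h2piS.le]
  ring

theorem gaussianAvgLogLik_lt {S S' V : ℝ} (hS : 0 < S) (hS' : 0 < S') (hV : S' < V) :
    gaussianAvgLogLik S V < gaussianAvgLogLik S' S' := by
  have hlog : Real.log (S' / S) ≤ S' / S - 1 := Real.log_le_sub_one_of_pos (by positivity)
  have hfrac : S' / S < V / S := by gcongr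
  have hsplit :
      Real.log (2 * Real.pi * S') - Real.log (2 * Real.pi * S) = Real.log (S' / S) := by
    rw [← Real.log_div (by positivity) (by positivity)]
    congr 1
    field_simp
  have hV2 : V / (2 * S) = V / S / 2 := by ring
  have hS'2 : S' / (2 * S') = 1 / 2 := by field_simp
  unfold gaussianAvgLogLik
  rw [hV2, hS'2]
  linarith

section Bayes

variable {T : Type*} [Fintype T] [Nonempty T] {p : T → ℕ → ℝ} {π : ℕ → T → ℝ}
  (hp : ∀ t k, 0 < p t k) (h0 : ∀ t, 0 < π 0 t)
  (hrec : ∀ k t, π (k + 1) t = p t (k + 1) * π k t / ∑ s, p s (k + 1) * π k s)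
include hp h0 hrec

theorem bayes_pos : ∀ k t, 0 < π k t := by
  intro k
  induction k with
  | zero => exact h0
  | succ k ih =>
    intro t
    rw [hrec]
    exact div_pos (mul_pos (hp t _) (ih t))
      (sum_pos (fun s _ => mul_pos (hp s _) (ih s)) univ_nonempty)

theorem bayes_sum_succ (k : ℕ) : ∑ t, π (k + 1) t = 1 := by
  have hZ : 0 < ∑ s, p s (k + 1) * π k s :=
    sum_pos (fun s _ => mul_pos (hp s _) (bayes_pos hp h0 hrec k s)) univ_nonempty
  simp only [hrec, ← sum_div, div_self hZ.ne']

theorem bayes_ratio_eq (t t' : T) (n : ℕ) :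
    π n t / π n t' =
      π 0 t / π 0 t' * Real.exp (∑ k ∈ Icc 1 n, (Real.log (p t k) - Real.log (p t' k))) := by
  induction n with
  | zero => simp
  | succ m ih =>
    have hπ := bayes_pos hp h0 hrec m
    have hZ : 0 < ∑ s, p s (m + 1) * π m s :=
      sum_pos (fun s _ => mul_pos (hp s _) (hπ s)) univ_nonempty
    have hstep :
        π (m + 1) t / π (m + 1) t' = π m t / π m t' * (p t (m + 1) / p t' (m + 1)) := by
      rw [hrec, hrec]
      field_simp [(hp t' (m + 1)).ne', (hπ t').ne', hZ.ne']
    rw [hstep, ih, sum_Icc_succ_top (by omega), Real.exp_add, Real.exp_sub,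
      Real.exp_log (hp t _), Real.exp_log (hp t' _), mul_assoc]

end Bayes

theorem tendsto_weights_of_ratio_tendsto_zero {T : Type*} [Fintype T] {w : ℕ → T → ℝ}
    {t₀ : T} (hpos : ∀ k t, 0 < w k t) (hsum : ∀ᶠ k in atTop, ∑ t, w k t = 1)
    (hratio : ∀ t, t ≠ t₀ → Tendsto (fun k => w k t / w k t₀) atTop (𝓝 0)) :
    Tendsto (fun k => w k t₀) atTop (𝓝 1) ∧
      ∀ t, t ≠ t₀ → Tendsto (fun k => w k t) atTop (𝓝 0) := by
  classical
  have hothers : ∀ t, t ≠ t₀ → Tendsto (fun k => w k t) atTop (𝓝 0) := by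
    intro t ht
    refine squeeze_zero' (Eventually.of_forall fun k => (hpos k t).le) ?_ (hratio t ht)
    filter_upwards [hsum] with k hk
    have hle : w k t₀ ≤ 1 :=
      hk ▸ single_le_sum (fun s _ => (hpos k s).le) (mem_univ t₀)
    rw [le_div_iff₀ (hpos k t₀)]
    exact mul_le_of_le_one_right (hpos k t).le hle
  refine ⟨?_, hothers⟩
  have hrest : Tendsto (fun k => ∑ t ∈ univ.erase t₀, w k t) atTop (𝓝 0) := by
    simpa only [sum_const_zero] using
      tendsto_finsetSum (univ.erase t₀) fun t ht => hothers t (ne_of_mem_erase ht)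
  have hlim : Tendsto (fun k => 1 - ∑ t ∈ univ.erase t₀, w k t) atTop (𝓝 1) := by
    simpa only [sub_zero] using hrest.const_sub (1 : ℝ)
  refine hlim.congr' ?_
  filter_upwards [hsum] with k hk
  rw [← hk, ← add_sum_erase univ _ (mem_univ t₀), add_sub_cancel_right]

theorem posterior_convergence_general {T : Type*} [Fintype T] (tstar : T)
    (S : T → ℝ) (hS : ∀ t, 0 < S t)
    (ytil : T → ℕ → ℝ)
    (p : T → ℕ → ℝ)
    (hp : ∀ t τ, p t τ = (Real.sqrt (2 * Real.pi * S t))⁻¹ *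
      Real.exp (-(ytil t τ) ^ 2 / (2 * S t)))
    (π : ℕ → T → ℝ)
    (hπ0pos : ∀ t, 0 < π 0 t)
    (hrec : ∀ k, 1 ≤ k → ∀ t,
      π k t = p t k * π (k - 1) t / ∑ s, p s k * π (k - 1) s)
    (V : T → ℝ)
    (hV : ∀ t, Filter.Tendsto
      (fun n : ℕ => 1 / (n : ℝ) * ∑ τ ∈ Finset.Icc 1 n, (ytil t τ) ^ 2)
      Filter.atTop (nhds (V t)))
    (hVstar : V tstar = S tstar)
    (hVt : ∀ t, t ≠ tstar → S tstar < V t) :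
    Filter.Tendsto (fun k => π k tstar) Filter.atTop (nhds 1) ∧
    ∀ t, t ≠ tstar → Filter.Tendsto (fun k => π k t) Filter.atTop (nhds 0) := by
  have : Nonempty T := ⟨tstar⟩
  have hppos : ∀ t k, 0 < p t k := fun t k => by
    have := hS t
    rw [hp]
    positivity
  have hrec' : ∀ k t, π (k + 1) t = p t (k + 1) * π k t / ∑ s, p s (k + 1) * π k s :=
    fun k => hrec (k + 1) (Nat.le_add_left 1 k)
  have hloglik : ∀ t, Tendsto (cesaroMean fun k => Real.log (p t k)) atTop
      (𝓝 (gaussianAvgLogLik (S t) (V t))) := fun t => by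
    simp only [hp, log_gaussian_density (hS t)]
    convert (hV t).cesaroMean_const_add_mul _ _ using 2
    unfold gaussianAvgLogLik
    ring
  refine tendsto_weights_of_ratio_tendsto_zero (bayes_pos hppos hπ0pos hrec')
    (eventually_atTop.2 ⟨1, fun k hk => ?_⟩) fun t ht => ?_
  · obtain ⟨k, rfl⟩ := Nat.exists_eq_add_of_le' hk
    exact bayes_sum_succ hppos hπ0pos hrec' k
  have hdrift :=
    ((hloglik t).sub (hloglik tstar)).congr fun n => (cesaroMean_sub _ _ n).symm
  have hneg : gaussianAvgLogLik (S t) (V t) - gaussianAvgLogLik (S tstar) (V tstar) < 0 := by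
    rw [hVstar]
    exact sub_neg.2 (gaussianAvgLogLik_lt (hS t) (hS tstar) (hVt t ht))
  have hratio := (Real.tendsto_exp_atBot.comp
    (tendsto_sum_Icc_atBot_of_cesaroMean hdrift hneg)).const_mul (π 0 t / π 0 tstar)
  rw [mul_zero] at hratio
  exact hratio.congr fun n => (bayes_ratio_eq hppos hπ0pos hrec' t tstar n).symm

/-- Theorem 3.3: with Gaussian likelihoods of variances `S t` evaluated at the
prediction errors, Bayesian posteriors updated recursively from positive priors, and
Cesàro limits `V t` of the squared prediction errors satisfying `V t* = S t*` and
`V t > S t*` for `t ≠ t*`, the posterior of the true candidate `t*` converges to `1`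
and all other posteriors converge to `0`. -/
theorem posterior_convergence {T : Type*} [Fintype T] [Nonempty T] (tstar : T)
    (S : T → ℝ) (hS : ∀ t, 0 < S t)
    (ytil : T → ℕ → ℝ)
    (p : T → ℕ → ℝ)
    (hp : ∀ t τ, p t τ = (Real.sqrt (2 * Real.pi * S t))⁻¹ *
      Real.exp (-(ytil t τ) ^ 2 / (2 * S t)))
    (π : ℕ → T → ℝ)
    (hπ0pos : ∀ t, 0 < π 0 t) (hπ0sum : ∑ t, π 0 t = 1)
    (hrec : ∀ k, 1 ≤ k → ∀ t,
      π k t = p t k * π (k - 1) t / ∑ s, p s k * π (k - 1) s)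
    (V : T → ℝ)
    (hV : ∀ t, Filter.Tendsto
      (fun n : ℕ => 1 / (n : ℝ) * ∑ τ ∈ Finset.Icc 1 n, (ytil t τ) ^ 2)
      Filter.atTop (nhds (V t)))
    (hVstar : V tstar = S tstar)
    (hVt : ∀ t, t ≠ tstar → S tstar < V t) :
    Filter.Tendsto (fun k => π k tstar) Filter.atTop (nhds 1) ∧
    ∀ t, t ≠ tstar → Filter.Tendsto (fun k => π k t) Filter.atTop (nhds 0) :=
  posterior_convergence_general tstar S hS ytil p hp π hπ0pos hrec V hV hVstar hVt
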